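/- arXiv:1808.04858 — 5 statements merged into one kernel-verified Lean document; each statement's English description precedes it below -/
import Mathlib

section
/- Let m ≥ 2 be an integer, S a set, and h ∈ S^(2^m) an m-dimensional vertex-labeled cube. If every cross section square of h is of the form γ_i^2(a,b) for some i ∈ 2 and a, b ∈ S (i.e., every cross section square either has both columns constant or both rows constant), then h = γ_j^m(c,d) for some j ∈ m and c, d ∈ S (i.e., h depends on at most one coordinate). -/
private lemma reach_aux {m : ℕ} (P : (Fin m → Bool) → Prop)
    (step : ∀ f (k : Fin m) b, P f → P (Function.update f k b)) (g : Fin m → Bool) :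
    ∀ n (f : Fin m → Bool), (Finset.univ.filter (fun k => f k ≠ g k)).card ≤ n → P f → P g := by
  intro n
  induction n with
  | zero =>
    intro f hcard hf
    have hfg : ∀ k, f k = g k := by
      intro k
      by_contra hk
      have hmem : k ∈ Finset.univ.filter (fun k => f k ≠ g k) := by simp [hk]
      have := Finset.card_pos.mpr ⟨k, hmem⟩
      omega
    rwa [funext hfg] at hf
  | succ n ih =>
    intro f hcard hf
    by_cases hfg : f = g
    · rwa [hfg] at hf
    · obtain ⟨k, hk⟩ : ∃ k, f k ≠ g k := by
        by_contra hall
        push_neg at hall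
        exact hfg (funext hall)
      apply ih (Function.update f k (g k)) _ (step f k (g k) hf)
      have hsub : (Finset.univ.filter (fun l => Function.update f k (g k) l ≠ g l)) ⊆
          (Finset.univ.filter (fun l => f l ≠ g l)).erase k := by
        intro l hl
        simp only [Finset.mem_filter, Finset.mem_univ, true_and] at hl
        rcases eq_or_ne l k with rfl | hlk
        · simp [Function.update_self] at hl
        · rw [Function.update_of_ne hlk] at hl
          exact Finset.mem_erase.mpr ⟨hlk, by simp [hl]⟩
      have hkmem : k ∈ Finset.univ.filter (fun l => f l ≠ g l) := by simp [hk]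
      have h1 := Finset.card_le_card hsub
      have h2 := Finset.card_erase_of_mem hkmem
      omega

private lemma reach {m : ℕ} (P : (Fin m → Bool) → Prop)
    (step : ∀ f (k : Fin m) b, P f → P (Function.update f k b))
    (f g : Fin m → Bool) (hf : P f) : P g :=
  reach_aux P step g (Finset.univ.filter (fun k => f k ≠ g k)).card f le_rfl hf

theorem stmt1 {S : Type*} (m : ℕ) (hm : 2 ≤ m) (h : (Fin m → Bool) → S)
    (hyp : ∀ i j : Fin m, i ≠ j → ∀ p : Fin m → Bool,
      (∃ x y : S, ∀ a b : Bool,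
          h (Function.update (Function.update p i a) j b) = if a then y else x) ∨
      (∃ x y : S, ∀ a b : Bool,
          h (Function.update (Function.update p i a) j b) = if b then y else x)) :
    ∃ (j : Fin m) (c d : S), ∀ f : Fin m → Bool, h f = if f j then d else c := by
  classical
  -- If coordinate k is "constant", flipping it never changes h
  have hC : ∀ (k : Fin m),
      (∀ x, h (Function.update x k true) = h (Function.update x k false)) →
      ∀ x b, h (Function.update x k b) = h x := by
    intro k hk x b
    have h1 : ∀ b', h (Function.update x k b') = h (Function.update x k false) := by
      intro b'; cases b'
      · rfl
      · exact hk x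
    calc h (Function.update x k b) = h (Function.update x k false) := h1 b
      _ = h (Function.update x k (x k)) := (h1 (x k)).symm
      _ = h x := by rw [Function.update_eq_self]
  -- Non-constancy in coordinate i propagates to every vertex
  have prop : ∀ (i : Fin m) (f : Fin m → Bool),
      h (Function.update f i true) ≠ h (Function.update f i false) →
      ∀ g, h (Function.update g i true) ≠ h (Function.update g i false) := by
    intro i f hf g
    apply reach (fun z => h (Function.update z i true) ≠ h (Function.update z i false))
      ?_ f g hf
    intro f k b hPf
    rcases eq_or_ne k i with rfl | hki
    · simpa only [Function.update_idem] using hPf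
    · rcases hyp i k (Ne.symm hki) f with ⟨x, y, hxy⟩ | ⟨x, y, hxy⟩
      · have h1 : ∀ a, h (Function.update f i a) = if a then y else x := by
          intro a
          have := hxy a ((Function.update f i a) k)
          rwa [Function.update_eq_self] at this
        have h2 : ∀ a, h (Function.update (Function.update f k b) i a) = if a then y else x := by
          intro a
          rw [Function.update_comm hki]
          exact hxy a b
        have hyx : y ≠ x := by
          have := hPf
          rw [h1 true, h1 false] at this
          simpa using this
        rw [h2 true, h2 false]
        simpa using hyx
      · exfalso
        apply hPf
        have h1 : ∀ a, h (Function.update f i a) = if (f k) then y else x := by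
          intro a
          have e : Function.update (Function.update f i a) k ((Function.update f i a) k)
              = Function.update f i a := Function.update_eq_self _ _
          have := hxy a ((Function.update f i a) k)
          rw [e] at this
          rw [this, Function.update_of_ne hki]
        rw [h1 true, h1 false]
  by_cases hall : ∀ (k : Fin m), ∀ x, h (Function.update x k true) = h (Function.update x k false)
  · -- h is constant
    refine ⟨⟨0, by omega⟩, h (fun _ => false), h (fun _ => false), ?_⟩
    intro f
    have hconst : h f = h (fun _ => false) := by
      apply reach (fun z => h z = h (fun _ => false)) ?_ (fun _ => false) f rfl
      intro f k b hPf
      rw [hC k (hall k) f b]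
      exact hPf
    rw [hconst]
    cases f ⟨0, by omega⟩ <;> simp
  · push_neg at hall
    obtain ⟨j, x0, hx0⟩ := hall
    have Dj : ∀ g, h (Function.update g j true) ≠ h (Function.update g j false) := prop j x0 hx0
    -- every other coordinate is constant
    have Ck : ∀ (k : Fin m), k ≠ j →
        ∀ x, h (Function.update x k true) = h (Function.update x k false) := by
      intro k hkj
      by_contra hnc
      push_neg at hnc
      obtain ⟨x1, hx1⟩ := hnc
      have Dk : ∀ g, h (Function.update g k true) ≠ h (Function.update g k false) :=
        prop k x1 hx1
      rcases hyp j k (Ne.symm hkj) x1 with ⟨x, y, hxy⟩ | ⟨x, y, hxy⟩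
      · exact Dk (Function.update x1 j true) (by rw [hxy true true, hxy true false])
      · apply Dj (Function.update x1 k true)
        have e : ∀ a, Function.update (Function.update x1 k true) j a
            = Function.update (Function.update x1 j a) k true := by
          intro a; rw [Function.update_comm hkj]
        rw [e true, e false, hxy true true, hxy false true]
    -- h depends only on coordinate j
    refine ⟨j, h (Function.update (fun _ => false) j false),
      h (Function.update (fun _ => false) j true), ?_⟩
    intro f
    have key : ∀ b, h (Function.update f j b) = h (Function.update (fun _ => false) j b) := by
      intro b
      apply reach (fun z => h (Function.update z j b)
          = h (Function.update (fun _ => false) j b)) ?_ (fun _ => false) f rfl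
      intro f k b' hPf
      rcases eq_or_ne k j with rfl | hkj
      · rwa [Function.update_idem]
      · rw [Function.update_comm hkj, hC k (Ck k hkj) (Function.update f j b) b']
        exact hPf
    have : h f = h (Function.update f j (f j)) := by rw [Function.update_eq_self]
    rw [this, key (f j)]
    cases f j <;> simp
end

section
/- For the algebra A_n and each j ∈ ω, the set R^j = {r_i^j : i ∈ ω} is contained in a single class of [1]_j^n, where [1]_0^n = 1 and [1]_{j+1}^n = [[1]_j^n, ..., [1]_j^n] is the n-ary derived series with respect to the n-ary term condition commutator. -/
/-- The carrier of the algebra `𝔸ₙ = ⟨Aₙ; t⟩`: `O = {o_{i,g}ʲ}` (with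
`g : (n-1) → 2`), `R = {rᵢʲ}`, and `G` the set of formal `n`-ary products,
so that `An.gg : Aₙⁿ → G` is a fixed injection `s`. -/
inductive An (n : ℕ) : Type where
  | o (i j : ℕ) (g : Fin (n - 1) → Bool) : An n
  | r (i j : ℕ) : An n
  | gg (a : Fin n → An n) : An n

open Classical in
/-- The `n`-ary operation `t` of `𝔸ₙ`: on tuples `(r_{4i+ε₀}ʲ, …, r_{4i+ε_{n-1}}ʲ)`
with all `εₖ ∈ {0,2}` it equals `rᵢʲ⁺¹` if `ε₀ = ⋯ = ε_{n-2} = 2, ε_{n-1} = 0`;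
`r_{i+1}ʲ⁺¹` if all `εₖ = 2`; and `o_{i,g}ʲ` with `g(k) = εₖ/2` otherwise.
On all other tuples it is the fixed injection `s` into `G`. -/
noncomputable def tOp (n : ℕ) (a : Fin n → An n) : An n :=
  if hpos : 0 < n then
    if h : ∃ p : ℕ × ℕ, ∀ k : Fin n,
        a k = An.r (4 * p.1) p.2 ∨ a k = An.r (4 * p.1 + 2) p.2 then
      let i := h.choose.1
      let j := h.choose.2
      if ∀ k : Fin n, (k : ℕ) < n - 1 → a k = An.r (4 * i + 2) j then
        if a ⟨n - 1, by omega⟩ = An.r (4 * i) j then An.r i (j + 1)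
        else An.r (i + 1) (j + 1)
      else
        An.o i j (fun k =>
          if a ⟨k.1, by have := k.isLt; omega⟩ = An.r (4 * i + 2) j then true
          else false)
    else An.gg a
  else An.gg a

/-- `x ∈ R`. -/
def An.inR {n : ℕ} (x : An n) : Prop := ∃ i j : ℕ, x = An.r i j

/-- `x ∈ O`. -/
def An.inO {n : ℕ} (x : An n) : Prop := ∃ (i j : ℕ) (g : Fin (n - 1) → Bool), x = An.o i j g

/-- A congruence of `𝔸ₙ`: an equivalence relation compatible with `t`. -/
def IsConN (n : ℕ) (θ : An n → An n → Prop) : Prop :=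
  Equivalence θ ∧
    ∀ x y : Fin n → An n, (∀ k, θ (x k) (y k)) → θ (tOp n x) (tOp n y)

/-- `M(θ₀,…,θ_{n-1})`: the subalgebra of `𝔸ₙ^(2ⁿ)` generated by the cubes
`γᵢⁿ(x,y)` for `(x,y) ∈ θᵢ`, `i ∈ n`. -/
inductive MN (n : ℕ) (θ : Fin n → (An n → An n → Prop)) :
    ((Fin n → Bool) → An n) → Prop where
  | gen (i : Fin n) (x y : An n) (hxy : θ i x y) :
      MN n θ (fun f => if f i then y else x)
  | app (c : Fin n → (Fin n → Bool) → An n) (hc : ∀ k, MN n θ (c k)) :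
      MN n θ (fun f => tOp n (fun k => c k f))

/-- Centrality: for every `h ∈ M(θ₀,…,θ_{n-1})`, if all `(n-1)`-support lines
of `h` are `δ`-pairs then so is the `(n-1)`-pivot line. -/
def CenN (n : ℕ) (hn : 0 < n) (θ : Fin n → (An n → An n → Prop))
    (δ : An n → An n → Prop) : Prop :=
  ∀ h : (Fin n → Bool) → An n, MN n θ h →
    (∀ f : Fin n → Bool, (∃ k : Fin n, k ≠ ⟨n - 1, by omega⟩ ∧ f k = false) →
      δ (h (Function.update f ⟨n - 1, by omega⟩ false))
        (h (Function.update f ⟨n - 1, by omega⟩ true))) →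
    δ (h (Function.update (fun _ => true) (⟨n - 1, by omega⟩ : Fin n) false))
      (h (fun _ => true))

/-- The `n`-ary term condition commutator: the least congruence `δ` such that
the centrality condition holds. -/
def commN (n : ℕ) (hn : 0 < n) (θ : Fin n → (An n → An n → Prop)) :
    An n → An n → Prop :=
  fun a b => ∀ δ : An n → An n → Prop, IsConN n δ → CenN n hn θ δ → δ a b

/-- The `n`-ary derived series `[1]₀ⁿ = 1`, `[1]_{j+1}ⁿ = [[1]_jⁿ,…,[1]_jⁿ]`. -/
def dserN (n : ℕ) (hn : 0 < n) : ℕ → An n → An n → Prop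
  | 0 => fun _ _ => True
  | j + 1 => commN n hn (fun _ => dserN n hn j)



open Classical in
lemma choose_eq {n : ℕ} (hpos : 0 < n) (i j : ℕ) (a : Fin n → An n)
    (ha : ∀ k, a k = An.r (4 * i) j ∨ a k = An.r (4 * i + 2) j)
    (hex : ∃ p : ℕ × ℕ, ∀ k : Fin n,
        a k = An.r (4 * p.1) p.2 ∨ a k = An.r (4 * p.1 + 2) p.2) :
    hex.choose = (i, j) := by
  have hp := hex.choose_spec ⟨0, hpos⟩
  have h0 := ha ⟨0, hpos⟩
  rcases h0 with h0 | h0 <;> rw [h0] at hp <;> rcases hp with hp | hp <;>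
    · injection hp with h1 h2
      exact Prod.ext (by omega) (by omega)

open Classical in
lemma tOp_eq {n : ℕ} (hpos : 0 < n) (i j : ℕ) (a : Fin n → An n)
    (ha : ∀ k, a k = An.r (4 * i) j ∨ a k = An.r (4 * i + 2) j) :
    tOp n a =
      if ∀ k : Fin n, (k : ℕ) < n - 1 → a k = An.r (4 * i + 2) j then
        if a ⟨n - 1, by omega⟩ = An.r (4 * i) j then An.r i (j + 1)
        else An.r (i + 1) (j + 1)
      else
        An.o i j (fun k =>
          if a ⟨k.1, by have := k.isLt; omega⟩ = An.r (4 * i + 2) j then true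
          else false) := by
  have hex : ∃ p : ℕ × ℕ, ∀ k : Fin n,
      a k = An.r (4 * p.1) p.2 ∨ a k = An.r (4 * p.1 + 2) p.2 := ⟨(i, j), ha⟩
  unfold tOp
  rw [dif_pos hpos, dif_pos hex]
  simp only [choose_eq hpos i j a ha hex]

/-- For each `j`, the set `Rʲ = {rᵢʲ : i ∈ ω}` is contained in a single
`[1]_jⁿ`-class. -/
theorem stmt11 (n : ℕ) (hn : 2 ≤ n) (j : ℕ) :
    ∀ i i' : ℕ, dserN n (by omega) j (An.r i j) (An.r i' j) := by
  induction j with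
  | zero => intro i i'; trivial
  | succ j ih =>
    have hpos : 0 < n := by omega
    have step : ∀ (δ : An n → An n → Prop), IsConN n δ →
        CenN n hpos (fun _ => dserN n hpos j) δ →
        ∀ i : ℕ, δ (An.r i (j + 1)) (An.r (i + 1) (j + 1)) := by
      intro δ hδ hcen i
      have hne : (An.r (4 * i + 2) j : An n) ≠ An.r (4 * i) j := by
        intro h; injection h with h1 h2; omega
      set last : Fin n := ⟨n - 1, by omega⟩ with hlast
      set h : (Fin n → Bool) → An n :=
        fun f => tOp n (fun k => if f k then An.r (4 * i + 2) j else An.r (4 * i) j)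
        with hh
      have ha : ∀ f : Fin n → Bool, ∀ k : Fin n,
          (if f k then An.r (4 * i + 2) j else An.r (4 * i) j : An n) = An.r (4 * i) j ∨
          (if f k then An.r (4 * i + 2) j else An.r (4 * i) j : An n) = An.r (4 * i + 2) j := by
        intro f k; cases f k <;> simp
      have hm : MN n (fun _ => dserN n hpos j) h :=
        MN.app (fun k f => if f k then An.r (4 * i + 2) j else An.r (4 * i) j)
          (fun k => MN.gen k (An.r (4 * i) j) (An.r (4 * i + 2) j) (ih _ _))
      have hsupp : ∀ f : Fin n → Bool, (∃ k : Fin n, k ≠ last ∧ f k = false) →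
          δ (h (Function.update f last false)) (h (Function.update f last true)) := by
        rintro f ⟨k0, hk0, hfk0⟩
        have hk0' : (k0 : ℕ) < n - 1 := by
          have h1 := k0.isLt
          have h2 : (k0 : ℕ) ≠ n - 1 := fun h' => hk0 (Fin.ext h')
          omega
        have hcond : ∀ b : Bool, ¬ ∀ k : Fin n, (k : ℕ) < n - 1 →
            (if Function.update f last b k then An.r (4 * i + 2) j
              else An.r (4 * i) j : An n) = An.r (4 * i + 2) j := by
          intro b hc
          have hck := hc k0 hk0'
          rw [Function.update_of_ne hk0, hfk0] at hck
          simp only [Bool.false_eq_true, if_neg] at hck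
          exact hne hck.symm
        have keq : h (Function.update f last false) = h (Function.update f last true) := by
          simp only [hh]
          rw [tOp_eq hpos i j _ (ha _), tOp_eq hpos i j _ (ha _),
            if_neg (hcond false), if_neg (hcond true)]
          congr 1
          funext k
          have hkne : (⟨k.1, by have := k.isLt; omega⟩ : Fin n) ≠ last := by
            intro h'
            have h2 := k.isLt
            have h3 : (k.1 : ℕ) = n - 1 := congrArg Fin.val h'
            omega
          rw [Function.update_of_ne hkne, Function.update_of_ne hkne]
        rw [keq]
        exact hδ.1.refl _
      have hpiv := hcen h hm hsupp
      have e1 : h (Function.update (fun _ => true) last false) = An.r i (j + 1) := by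
        simp only [hh]
        rw [tOp_eq hpos i j _ (ha _)]
        have hcond : ∀ k : Fin n, (k : ℕ) < n - 1 →
            (if Function.update (fun _ => true) last false k then An.r (4 * i + 2) j
              else An.r (4 * i) j : An n) = An.r (4 * i + 2) j := by
          intro k hk
          have hkne : k ≠ last := by
            intro h'
            have h2 := k.isLt
            have h3 : (k : ℕ) = n - 1 := congrArg Fin.val h'
            omega
          rw [Function.update_of_ne hkne]
          simp
        rw [if_pos hcond]
        have hu : Function.update (fun _ => true) last false ⟨n - 1, by omega⟩ = false := by
          rw [show (⟨n - 1, by omega⟩ : Fin n) = last from rfl]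
          simp
        rw [hu]
        simp
      have e2 : h (fun _ => true) = An.r (i + 1) (j + 1) := by
        have h2 := tOp_eq hpos i j (fun _ : Fin n => An.r (4 * i + 2) j)
          (fun k => Or.inr rfl)
        rw [if_pos (fun k _ => rfl), if_neg hne] at h2
        exact h2
      rw [e1, e2] at hpiv
      exact hpiv
    intro i i' δ hδ hcen
    have st := step δ hδ hcen
    have chain : ∀ a m : ℕ, δ (An.r a (j + 1)) (An.r (a + m) (j + 1)) := by
      intro a m
      induction m with
      | zero => exact hδ.1.refl _
      | succ m ihm => exact hδ.1.trans ihm (st (a + m))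
    rcases Nat.le_total i i' with hle | hle
    · obtain ⟨m, rfl⟩ := Nat.le.dest hle
      exact chain i m
    · obtain ⟨m, rfl⟩ := Nat.le.dest hle
      exact hδ.1.symm (chain i' m)
end

section
/- For the algebra A_n, if the square h = (c, c; r_k^ℓ, r_i^j) (left column constant equal to c, right column (r_k^ℓ, r_i^j)) belongs to M(1,1), the subalgebra of A_n^4 generated by squares with constant rows or constant columns, where each n-ary application of t combines n squares, then j = ℓ and |i − k| ∈ {0,1}. -/
/-- `M(1,1)` over `𝔸ₙ`: the subalgebra of `𝔸ₙ⁴` (coordinatewise `n`-ary `t`)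
generated by squares with constant columns `(x,x;y,y)` or constant rows
`(x,y;x,y)`. A quadruple `(h₁,h₂,h₃,h₄)` is the square with columns
`(h₁,h₂)`, `(h₃,h₄)` and rows `(h₁,h₃)`, `(h₂,h₄)`. -/
inductive MsqN (n : ℕ) : An n × An n × An n × An n → Prop where
  | col (x y : An n) : MsqN n (x, x, y, y)
  | row (x y : An n) : MsqN n (x, y, x, y)
  | app (q : Fin n → An n × An n × An n × An n) (hq : ∀ k, MsqN n (q k)) :
      MsqN n (tOp n (fun k => (q k).1), tOp n (fun k => (q k).2.1),
              tOp n (fun k => (q k).2.2.1), tOp n (fun k => (q k).2.2.2))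


/-- Inversion for `tOp`: if the output is an `r`, the input column is aligned
to a block `(P, Q)` and the output is `r P (Q+1)` or `r (P+1) (Q+1)`. -/
lemma invr {n : ℕ} (hn : 0 < n) (C : Fin n → An n) (a b : ℕ)
    (h : tOp n C = An.r a b) :
    ∃ P Q : ℕ, (∀ k, C k = An.r (4 * P) Q ∨ C k = An.r (4 * P + 2) Q) ∧
      b = Q + 1 ∧ (a = P ∨ a = P + 1) := by
  unfold tOp at h
  rw [dif_pos hn] at h
  by_cases hex : ∃ p : ℕ × ℕ, ∀ k : Fin n,
      C k = An.r (4 * p.1) p.2 ∨ C k = An.r (4 * p.1 + 2) p.2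
  · rw [dif_pos hex] at h
    refine ⟨hex.choose.1, hex.choose.2, hex.choose_spec, ?_⟩
    dsimp only at h
    split at h
    · split at h
      · injection h with h1 h2; omega
      · injection h with h1 h2; omega
    · exact absurd h (by simp)
  · rw [dif_neg hex] at h
    exact absurd h (by simp)

/-- Key invariant: a square in `M(1,1)` whose bottom row consists of `r`'s is
either a "row" square (tops equal bottoms) or its two bottom entries are at the
same level with indices within distance 1. -/
lemma key {n : ℕ} (hn : 0 < n) :
    ∀ x : An n × An n × An n × An n, MsqN n x → ∀ a b c d : ℕ,
      x.2.2.1 = An.r a b → x.2.2.2 = An.r c d →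
      (x.1 = x.2.2.1 ∧ x.2.1 = x.2.2.2) ∨
        (b = d ∧ (a = c ∨ a + 1 = c ∨ c + 1 = a)) := by
  intro x hx
  induction hx with
  | col u v =>
      intro a b c d h3 h4
      right
      injection h3.symm.trans h4 with e1 e2
      omega
  | row u v =>
      intro a b c d h3 h4
      exact Or.inl ⟨rfl, rfl⟩
  | app q hq IH =>
      intro a b c d h3 h4
      obtain ⟨P, Q, hC, hb, ha⟩ := invr hn _ a b h3
      obtain ⟨P', Q', hD, hd, hc⟩ := invr hn _ c d h4
      by_cases hrow : ∀ k, (q k).1 = (q k).2.2.1 ∧ (q k).2.1 = (q k).2.2.2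
      · left
        constructor
        · exact congrArg (tOp n) (funext fun k => (hrow k).1)
        · exact congrArg (tOp n) (funext fun k => (hrow k).2)
      · push_neg at hrow
        obtain ⟨k1, hk1⟩ := hrow
        have hPQ : P = P' ∧ Q = Q' := by
          have hIH := IH k1
          rcases hC k1 with h | h <;> rcases hD k1 with h' | h' <;>
          · rcases hIH _ _ _ _ h h' with ⟨e1, e2⟩ | ⟨e1, e2⟩
            · exact absurd e2 (hk1 e1)
            · exact ⟨by omega, by omega⟩
        right
        exact ⟨by omega, by omega⟩

theorem stmt13 (n : ℕ) (hn : 2 ≤ n) (c : An n) (i j k l : ℕ)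
    (h : MsqN n (c, c, An.r k l, An.r i j)) :
    j = l ∧ |(i : ℤ) - (k : ℤ)| ≤ 1 := by
  rcases key (by omega : 0 < n) _ h k l i j rfl rfl with ⟨h1, h2⟩ | ⟨h1, h2⟩
  · rw [h1] at h2
    injection h2 with e1 e2
    constructor
    · omega
    · rw [abs_le]; constructor <;> omega
  · constructor
    · omega
    · rw [abs_le]; constructor <;> omega
end

section
/- For the algebra A_n, if h = (r_u^v, r_i^j; a, r_ℓ^k) ∈ M(1,1) with r_u^v, r_i^j, r_ℓ^k ∈ R and a ∈ A_n, then h has constant rows or constant columns. -/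
lemma tOp_r {n : ℕ} (hn : 2 ≤ n) (a : Fin n → An n) (u v : ℕ)
    (h : tOp n a = An.r u v) :
    ∃ i j : ℕ, (∀ k : Fin n, (k : ℕ) < n - 1 → a k = An.r (4 * i + 2) j) ∧
      (a ⟨n - 1, by omega⟩ = An.r (4 * i) j ∨ a ⟨n - 1, by omega⟩ = An.r (4 * i + 2) j) := by
  have hpos : 0 < n := by omega
  rw [tOp, dif_pos hpos] at h
  by_cases hex : ∃ p : ℕ × ℕ, ∀ k : Fin n,
      a k = An.r (4 * p.1) p.2 ∨ a k = An.r (4 * p.1 + 2) p.2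
  · rw [dif_pos hex] at h
    by_cases hall : ∀ k : Fin n, (k : ℕ) < n - 1 →
        a k = An.r (4 * hex.choose.1 + 2) hex.choose.2
    · exact ⟨hex.choose.1, hex.choose.2, hall, hex.choose_spec ⟨n - 1, by omega⟩⟩
    · rw [if_neg hall] at h; exact absurd h (by simp)
  · rw [dif_neg hex] at h; exact absurd h (by simp)

lemma key_s14 (n : ℕ) (hn : 2 ≤ n) :
    ∀ h : An n × An n × An n × An n, MsqN n h → ∀ u v i j l k : ℕ,
      h.1 = An.r u v → h.2.1 = An.r i j → h.2.2.2 = An.r l k →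
      (∃ x y : An n, h = (x, y, x, y)) ∨ (∃ x y : An n, h = (x, x, y, y)) := by
  intro h hm
  induction hm with
  | col x y => exact fun _ _ _ _ _ _ _ _ _ => Or.inr ⟨x, y, rfl⟩
  | row x y => exact fun _ _ _ _ _ _ _ _ _ => Or.inl ⟨x, y, rfl⟩
  | app q hq ih =>
    intro u v i j l k h1 h2 h4
    obtain ⟨i1, j1, hA1, hA2⟩ := tOp_r hn (fun k => (q k).1) u v h1
    obtain ⟨i2, j2, hB1, hB2⟩ := tOp_r hn (fun k => (q k).2.1) i j h2
    obtain ⟨i3, j3, hD1, hD2⟩ := tOp_r hn (fun k => (q k).2.2.2) l k h4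
    set m1 : Fin n := ⟨n - 1, by omega⟩ with hm1
    -- each column square is row- or col-shaped
    have hrc : ∀ kk : Fin n,
        ((q kk).1 = (q kk).2.2.1 ∧ (q kk).2.1 = (q kk).2.2.2) ∨
        ((q kk).1 = (q kk).2.1 ∧ (q kk).2.2.1 = (q kk).2.2.2) := by
      intro kk
      have hcase : (kk : ℕ) < n - 1 ∨ kk = m1 := by
        have := kk.isLt
        rcases lt_or_ge (kk : ℕ) (n - 1) with h' | h'
        · exact Or.inl h'
        · exact Or.inr (Fin.ext (by rw [hm1]; show (kk : ℕ) = n - 1; omega))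
      have e1 : ∃ p q', (q kk).1 = An.r p q' := by
        rcases hcase with h' | h'
        · exact ⟨_, _, hA1 kk h'⟩
        · rw [h']; rcases hA2 with h'' | h'' <;> exact ⟨_, _, h''⟩
      have e2 : ∃ p q', (q kk).2.1 = An.r p q' := by
        rcases hcase with h' | h'
        · exact ⟨_, _, hB1 kk h'⟩
        · rw [h']; rcases hB2 with h'' | h'' <;> exact ⟨_, _, h''⟩
      have e3 : ∃ p q', (q kk).2.2.2 = An.r p q' := by
        rcases hcase with h' | h'
        · exact ⟨_, _, hD1 kk h'⟩
        · rw [h']; rcases hD2 with h'' | h'' <;> exact ⟨_, _, h''⟩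
      obtain ⟨p1, q1, e1⟩ := e1
      obtain ⟨p2, q2, e2⟩ := e2
      obtain ⟨p3, q3, e3⟩ := e3
      rcases ih kk p1 q1 p2 q2 p3 q3 e1 e2 e3 with ⟨x, y, hxy⟩ | ⟨x, y, hxy⟩
      · left; rw [hxy]; exact ⟨rfl, rfl⟩
      · right; rw [hxy]; exact ⟨rfl, rfl⟩
    -- builders
    have mkrow : (∀ kk : Fin n, (q kk).1 = (q kk).2.2.1 ∧ (q kk).2.1 = (q kk).2.2.2) →
        (∃ x y : An n, (tOp n (fun k => (q k).1), tOp n (fun k => (q k).2.1),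
          tOp n (fun k => (q k).2.2.1), tOp n (fun k => (q k).2.2.2)) = (x, y, x, y)) ∨
        (∃ x y : An n, (tOp n (fun k => (q k).1), tOp n (fun k => (q k).2.1),
          tOp n (fun k => (q k).2.2.1), tOp n (fun k => (q k).2.2.2)) = (x, x, y, y)) := by
      intro hr
      have e1 : (fun k => (q k).2.2.1) = fun k : Fin n => (q k).1 :=
        funext fun kk => ((hr kk).1).symm
      have e2 : (fun k => (q k).2.2.2) = fun k : Fin n => (q k).2.1 :=
        funext fun kk => ((hr kk).2).symm
      exact Or.inl ⟨_, _, by rw [e1, e2]⟩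
    have mkcol : (∀ kk : Fin n, (q kk).1 = (q kk).2.1 ∧ (q kk).2.2.1 = (q kk).2.2.2) →
        (∃ x y : An n, (tOp n (fun k => (q k).1), tOp n (fun k => (q k).2.1),
          tOp n (fun k => (q k).2.2.1), tOp n (fun k => (q k).2.2.2)) = (x, y, x, y)) ∨
        (∃ x y : An n, (tOp n (fun k => (q k).1), tOp n (fun k => (q k).2.1),
          tOp n (fun k => (q k).2.2.1), tOp n (fun k => (q k).2.2.2)) = (x, x, y, y)) := by
      intro hr
      have e1 : (fun k => (q k).2.1) = fun k : Fin n => (q k).1 :=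
        funext fun kk => ((hr kk).1).symm
      have e2 : (fun k => (q k).2.2.2) = fun k : Fin n => (q k).2.2.1 :=
        funext fun kk => ((hr kk).2).symm
      exact Or.inr ⟨_, _, by rw [e1, e2]⟩
    by_cases hE1 : i1 = i2 ∧ j1 = j2
    · by_cases hE2 : i2 = i3 ∧ j2 = j3
      · -- all index pairs equal; columns agree below n-1, last coord decides
        obtain ⟨e12, f12⟩ := hE1
        obtain ⟨e23, f23⟩ := hE2
        subst e12 f12 e23 f23
        have hconst : ∀ kk : Fin n, (kk : ℕ) < n - 1 →
            (q kk).1 = An.r (4 * i1 + 2) j1 ∧ (q kk).2.1 = An.r (4 * i1 + 2) j1 ∧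
            (q kk).2.2.1 = An.r (4 * i1 + 2) j1 ∧ (q kk).2.2.2 = An.r (4 * i1 + 2) j1 := by
          intro kk hlt
          refine ⟨hA1 kk hlt, hB1 kk hlt, ?_, hD1 kk hlt⟩
          rcases hrc kk with ⟨hc, _⟩ | ⟨_, hc⟩
          · rw [← hc]; exact hA1 kk hlt
          · rw [hc]; exact hD1 kk hlt
        rcases hrc m1 with hlast | hlast
        · apply mkrow
          intro kk
          rcases lt_or_ge (kk : ℕ) (n - 1) with h' | h'
          · obtain ⟨c1, c2, c3, c4⟩ := hconst kk h'
            exact ⟨c1.trans c3.symm, c2.trans c4.symm⟩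
          · have : kk = m1 := Fin.ext (by rw [hm1]; show (kk : ℕ) = n - 1; have := kk.isLt; omega)
            rw [this]; exact hlast
        · apply mkcol
          intro kk
          rcases lt_or_ge (kk : ℕ) (n - 1) with h' | h'
          · obtain ⟨c1, c2, c3, c4⟩ := hconst kk h'
            exact ⟨c1.trans c2.symm, c3.trans c4.symm⟩
          · have : kk = m1 := Fin.ext (by rw [hm1]; show (kk : ℕ) = n - 1; have := kk.isLt; omega)
            rw [this]; exact hlast
      · -- (i2,j2) ≠ (i3,j3): everything is col-shaped
        apply mkcol
        intro kk
        rcases hrc kk with ⟨_, hBD⟩ | hc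
        · exfalso
          rcases lt_or_ge (kk : ℕ) (n - 1) with h' | h'
          · have := (hB1 kk h').symm.trans ((hBD.trans (hD1 kk h')))
            obtain ⟨ha, hb⟩ := An.r.inj this
            exact hE2 ⟨by omega, hb⟩
          · have hk : kk = m1 := Fin.ext (by rw [hm1]; show (kk : ℕ) = n - 1; have := kk.isLt; omega)
            rw [hk] at hBD
            rcases hB2 with hb | hb <;> rcases hD2 with hd | hd <;>
              · have := hb.symm.trans (hBD.trans hd)
                obtain ⟨ha, hb'⟩ := An.r.inj this
                exact hE2 ⟨by omega, hb'⟩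
        · exact hc
    · -- (i1,j1) ≠ (i2,j2): everything is row-shaped
      apply mkrow
      intro kk
      rcases hrc kk with hr | ⟨hAB, _⟩
      · exact hr
      · exfalso
        rcases lt_or_ge (kk : ℕ) (n - 1) with h' | h'
        · have := (hA1 kk h').symm.trans ((hAB.trans (hB1 kk h')))
          obtain ⟨ha, hb⟩ := An.r.inj this
          exact hE1 ⟨by omega, hb⟩
        · have hk : kk = m1 := Fin.ext (by rw [hm1]; show (kk : ℕ) = n - 1; have := kk.isLt; omega)
          rw [hk] at hAB
          rcases hA2 with ha | ha <;> rcases hB2 with hb | hb <;>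
            · have := ha.symm.trans (hAB.trans hb)
              obtain ⟨ha', hb'⟩ := An.r.inj this
              exact hE1 ⟨by omega, hb'⟩

theorem stmt14 (n : ℕ) (hn : 2 ≤ n) (u v i j l k : ℕ) (a : An n)
    (h : MsqN n (An.r u v, An.r i j, a, An.r l k)) :
    (∃ x y : An n, (An.r u v, An.r i j, a, An.r l k) = (x, y, x, y)) ∨
    (∃ x y : An n, (An.r u v, An.r i j, a, An.r l k) = (x, x, y, y)) := by
  exact key_s14 n hn _ h u v i j l k rfl rfl rfl
end

section
/- In the proof of supernilpotence of A_n, the following bit-flip propagation holds: suppose c ∈ M(1,...,1) (an (n+1)-dimensional cube over A_n) has every n-support line either constant or of the form (r_{4i+ε}^j, r_{4i+τ}^j) with {ε,τ} = {0,2}. If f, g ∈ 2^((n+1)∖{n}) differ in exactly one argument and the n-support line c_f is constant, then the n-support line c_g is also constant. -/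
/-- `M(1,…,1)` (`n+1` ones): the subalgebra of `𝔸ₙ^(2ⁿ⁺¹)` (coordinatewise
`n`-ary `t`) generated by the cubes `γᵢⁿ⁺¹(x,y)` for `i ∈ n+1`, `x, y ∈ Aₙ`. -/
inductive Mcube (n : ℕ) : ((Fin (n + 1) → Bool) → An n) → Prop where
  | gen (i : Fin (n + 1)) (x y : An n) : Mcube n (fun f => if f i then y else x)
  | app (c : Fin n → (Fin (n + 1) → Bool) → An n) (hc : ∀ k, Mcube n (c k)) :
      Mcube n (fun f => tOp n (fun k => c k f))


section Aux

variable {n : ℕ}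

/-- 2-dimensional analogue of `Mcube`: squares generated by rows and columns. -/
inductive Msq (n : ℕ) : (Bool → Bool → An n) → Prop where
  | row (x y : An n) : Msq n (fun a _ => if a then y else x)
  | col (x y : An n) : Msq n (fun _ b => if b then y else x)
  | app (d : Fin n → Bool → Bool → An n) (hd : ∀ k, Msq n (d k)) :
      Msq n (fun a b => tOp n (fun k => d k a b))

lemma msq_const (x : An n) : Msq n (fun _ _ => x) := by
  simpa using Msq.row (n := n) x x

/-- Characterization of tuples on which `tOp` outputs an element of `R`. -/
lemma tOp_eq_r (hn : 0 < n) (x : Fin n → An n) (m j : ℕ)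
    (hx : tOp n x = An.r m j) :
    ∃ j', j = j' + 1 ∧
      ((1 ≤ m ∧ ∀ k : Fin n, x k = An.r (4 * (m - 1) + 2) j') ∨
       ((∀ k : Fin n, (k : ℕ) < n - 1 → x k = An.r (4 * m + 2) j') ∧
        x ⟨n - 1, by omega⟩ = An.r (4 * m) j')) := by
  unfold tOp at hx
  rw [dif_pos hn] at hx
  by_cases h : ∃ p : ℕ × ℕ, ∀ k : Fin n,
      x k = An.r (4 * p.1) p.2 ∨ x k = An.r (4 * p.1 + 2) p.2
  · rw [dif_pos h] at hx
    simp only at hx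
    have hspec : ∀ k : Fin n,
        x k = An.r (4 * h.choose.1) h.choose.2 ∨
        x k = An.r (4 * h.choose.1 + 2) h.choose.2 := h.choose_spec
    by_cases hpat : ∀ k : Fin n, (k : ℕ) < n - 1 →
        x k = An.r (4 * h.choose.1 + 2) h.choose.2
    · rw [if_pos hpat] at hx
      by_cases hlast : x ⟨n - 1, by omega⟩ = An.r (4 * h.choose.1) h.choose.2
      · rw [if_pos hlast] at hx
        injection hx with h1 h2
        refine ⟨h.choose.2, h2.symm, Or.inr ⟨?_, ?_⟩⟩
        · intro k hk; rw [hpat k hk, h1]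
        · rw [hlast, h1]
      · rw [if_neg hlast] at hx
        injection hx with h1 h2
        refine ⟨h.choose.2, h2.symm, Or.inl ⟨by omega, ?_⟩⟩
        intro k
        have hval : x k = An.r (4 * h.choose.1 + 2) h.choose.2 := by
          rcases Nat.lt_or_ge (k : ℕ) (n - 1) with hk | hk
          · exact hpat k hk
          · have hkeq : k = ⟨n - 1, by omega⟩ := by
              apply Fin.ext; have := k.isLt; simp; omega
            rcases hspec k with hv | hv
            · exact absurd (hkeq ▸ hv) hlast
            · exact hv
        rw [hval]
        congr 1
        omega
    · rw [if_neg hpat] at hx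
      exact absurd hx (by simp)
  · rw [dif_neg h] at hx
    exact absurd hx (by simp)

/-- The key lemma: if the second line of a square in `M(1,1)` consists of two
elements of `R`, then the square is a row, a column, or the two elements of
the second line are `rₘʲ, r_{m+1}ʲ` in some order. -/
lemma msq_key (hn : 0 < n) {d : Bool → Bool → An n} (hm : Msq n d) :
    ∀ c₁ j₁ c₂ j₂, d true false = An.r c₁ j₁ → d true true = An.r c₂ j₂ →
      (d false false = d false true ∧ d true false = d true true) ∨
      (d false false = d true false ∧ d false true = d true true) ∨
      (j₁ = j₂ ∧ (c₁ = c₂ + 1 ∨ c₂ = c₁ + 1)) := by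
  induction hm with
  | row x y => intro _ _ _ _ _ _; exact Or.inl ⟨rfl, rfl⟩
  | col x y => intro _ _ _ _ _ _; exact Or.inr (Or.inl ⟨rfl, rfl⟩)
  | app d hd IH =>
    intro c₁ j₁ c₂ j₂ hC hD
    obtain ⟨j₁', rfl, hP1⟩ := tOp_eq_r hn _ _ _ hC
    obtain ⟨j₂', rfl, hP2⟩ := tOp_eq_r hn _ _ _ hD
    by_cases hall : ∀ k, d k false false = d k true false ∧ d k false true = d k true true
    · refine Or.inr (Or.inl ⟨?_, ?_⟩)
      · show tOp n _ = tOp n _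
        congr 1; funext k; exact (hall k).1
      · show tOp n _ = tOp n _
        congr 1; funext k; exact (hall k).2
    · rw [not_forall] at hall
      obtain ⟨kx, hkx⟩ := hall
      have hposk : ∀ k : Fin n, (k : ℕ) < n - 1 ∨ k = ⟨n - 1, by omega⟩ := by
        intro k
        rcases Nat.lt_or_ge (k : ℕ) (n - 1) with h | h
        · exact Or.inl h
        · right; apply Fin.ext; have := k.isLt; simp; omega
      -- values of the second line of the k-th input square
      rcases hP1 with ⟨hc₁, hL1⟩ | ⟨hR1, hR1l⟩ <;>
        rcases hP2 with ⟨hc₂, hL2⟩ | ⟨hR2, hR2l⟩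
      · -- L, L
        rcases IH kx _ _ _ _ (hL1 kx) (hL2 kx) with ⟨_, hcd⟩ | h2 | ⟨_, hcc⟩
        · have heq := (hL1 kx).symm.trans (hcd.trans (hL2 kx))
          injection heq with e1 e2
          have ec : c₁ = c₂ := by omega
          subst ec; subst e2
          refine Or.inl ⟨?_, by rw [hC, hD]⟩
          show tOp n _ = tOp n _
          congr 1; funext k
          rcases IH k _ _ _ _ (hL1 k) (hL2 k) with h | h | ⟨_, h⟩
          · exact h.1
          · rw [h.1, h.2, hL1 k, hL2 k]
          · rcases h with h | h <;> omega
        · exact absurd h2 hkx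
        · rcases hcc with h | h <;> omega
      · -- L, R
        rcases hposk kx with hk | hk
        · rcases IH kx _ _ _ _ (hL1 kx) (hR2 kx hk) with ⟨_, hcd⟩ | h2 | ⟨_, hcc⟩
          · have heq := (hL1 kx).symm.trans (hcd.trans (hR2 kx hk))
            injection heq with e1 e2
            refine Or.inr (Or.inr ⟨by omega, Or.inl (by omega)⟩)
          · exact absurd h2 hkx
          · rcases hcc with h | h <;> omega
        · have hR2l' : d kx true true = An.r (4 * c₂) j₂' := by rw [hk]; exact hR2l
          rcases IH kx _ _ _ _ (hL1 kx) hR2l' with ⟨_, hcd⟩ | h2 | ⟨_, hcc⟩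
          · have heq := (hL1 kx).symm.trans (hcd.trans hR2l')
            injection heq with e1 e2
            omega
          · exact absurd h2 hkx
          · rcases hcc with h | h <;> omega
      · -- R, L
        rcases hposk kx with hk | hk
        · rcases IH kx _ _ _ _ (hR1 kx hk) (hL2 kx) with ⟨_, hcd⟩ | h2 | ⟨_, hcc⟩
          · have heq := (hR1 kx hk).symm.trans (hcd.trans (hL2 kx))
            injection heq with e1 e2
            refine Or.inr (Or.inr ⟨by omega, Or.inr (by omega)⟩)
          · exact absurd h2 hkx
          · rcases hcc with h | h <;> omega
        · have hR1l' : d kx true false = An.r (4 * c₁) j₁' := by rw [hk]; exact hR1l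
          rcases IH kx _ _ _ _ hR1l' (hL2 kx) with ⟨_, hcd⟩ | h2 | ⟨_, hcc⟩
          · have heq := hR1l'.symm.trans (hcd.trans (hL2 kx))
            injection heq with e1 e2
            omega
          · exact absurd h2 hkx
          · rcases hcc with h | h <;> omega
      · -- R, R
        have hsame : c₁ = c₂ ∧ j₁' = j₂' := by
          rcases hposk kx with hk | hk
          · rcases IH kx _ _ _ _ (hR1 kx hk) (hR2 kx hk) with ⟨_, hcd⟩ | h2 | ⟨_, hcc⟩
            · have heq := (hR1 kx hk).symm.trans (hcd.trans (hR2 kx hk))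
              injection heq with e1 e2
              exact ⟨by omega, e2⟩
            · exact absurd h2 hkx
            · rcases hcc with h | h <;> omega
          · have hR1l' : d kx true false = An.r (4 * c₁) j₁' := by rw [hk]; exact hR1l
            have hR2l' : d kx true true = An.r (4 * c₂) j₂' := by rw [hk]; exact hR2l
            rcases IH kx _ _ _ _ hR1l' hR2l' with ⟨_, hcd⟩ | h2 | ⟨_, hcc⟩
            · have heq := hR1l'.symm.trans (hcd.trans hR2l')
              injection heq with e1 e2
              exact ⟨by omega, e2⟩
            · exact absurd h2 hkx
            · rcases hcc with h | h <;> omega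
        obtain ⟨ec, ej⟩ := hsame
        subst ec; subst ej
        refine Or.inl ⟨?_, by rw [hC, hD]⟩
        show tOp n _ = tOp n _
        congr 1; funext k
        rcases hposk k with hk | hk
        · rcases IH k _ _ _ _ (hR1 k hk) (hR2 k hk) with h | h | ⟨_, h⟩
          · exact h.1
          · rw [h.1, h.2, hR1 k hk, hR2 k hk]
          · rcases h with h | h <;> omega
        · subst hk
          rcases IH _ _ _ _ _ hR1l hR2l with h | h | ⟨_, h⟩
          · exact h.1
          · rw [h.1, h.2, hR1l, hR2l]
          · rcases h with h | h <;> omega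

/-- Restriction of a cube in `M(1,…,1)` to a square in `M(1,1)` along the
directions `k₀` and `Fin.last n`. -/
lemma mcube_restrict {c : (Fin (n + 1) → Bool) → An n} (hm : Mcube n c)
    (f g : Fin (n + 1) → Bool) (k₀ : Fin (n + 1)) (hk₀ : k₀ ≠ Fin.last n)
    (hne : f k₀ ≠ g k₀) (hagree : ∀ k, k ≠ k₀ → k ≠ Fin.last n → f k = g k) :
    Msq n (fun a b => c (Function.update (if a then g else f) (Fin.last n) b)) := by
  induction hm with
  | gen i x y =>
    by_cases hi : i = Fin.last n
    · subst hi
      simp only [Function.update_self]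
      exact Msq.col x y
    · have hupd : ∀ (h : Fin (n + 1) → Bool) (b : Bool),
          Function.update h (Fin.last n) b i = h i :=
        fun h b => Function.update_of_ne hi _ _
      simp only [hupd]
      by_cases hik : i = k₀
      · subst hik
        cases hfv : f i <;> cases hgv : g i
        · exact absurd (hfv.trans hgv.symm) hne
        · have he : (fun (a : Bool) (_ : Bool) => if (if a then g else f) i then y else x)
              = fun (a : Bool) (_ : Bool) => if a then y else x := by
            funext a b; cases a
            · show (if f i then y else x) = x
              rw [hfv]; rfl
            · show (if g i then y else x) = y
              rw [hgv]; rfl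
          rw [he]
          exact Msq.row x y
        · have he : (fun (a : Bool) (_ : Bool) => if (if a then g else f) i then y else x)
              = fun (a : Bool) (_ : Bool) => if a then x else y := by
            funext a b; cases a
            · show (if f i then y else x) = y
              rw [hfv]; rfl
            · show (if g i then y else x) = x
              rw [hgv]; rfl
          rw [he]
          exact Msq.row y x
        · exact absurd (hfv.trans hgv.symm) hne
      · have : (fun (a : Bool) (_ : Bool) => if (if a then g else f) i then y else x)
            = fun (_ : Bool) (_ : Bool) => if f i then y else x := by
          funext a b; cases a
          · rfl
          · rw [show (if (true : Bool) then g else f) = g from rfl, ← hagree i hik hi]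
        rw [this]
        cases f i
        · exact msq_const x
        · exact msq_const y
  | app cs hcs IH =>
    exact Msq.app _ IH

end Aux

/-- Bit-flip propagation: if every `n`-support line of `c ∈ M(1,…,1)` is
constant or of the form `(r_{4i+ε}ʲ, r_{4i+τ}ʲ)` with `{ε,τ} = {0,2}`, and the
`n`-support lines at `f` and `g` (which differ in exactly one argument) are
such that the line at `f` is constant, then the line at `g` is constant. -/

theorem stmt18 (n : ℕ) (hn : 2 ≤ n) (c : (Fin (n + 1) → Bool) → An n)
    (hm : Mcube n c)
    (hsupp : ∀ f : Fin (n + 1) → Bool,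
      (∃ k : Fin (n + 1), k ≠ Fin.last n ∧ f k = false) →
      (c (Function.update f (Fin.last n) false) =
          c (Function.update f (Fin.last n) true)) ∨
      (∃ i j : ℕ,
        (c (Function.update f (Fin.last n) false) = An.r (4 * i) j ∧
          c (Function.update f (Fin.last n) true) = An.r (4 * i + 2) j) ∨
        (c (Function.update f (Fin.last n) false) = An.r (4 * i + 2) j ∧
          c (Function.update f (Fin.last n) true) = An.r (4 * i) j)))
    (f g : Fin (n + 1) → Bool)
    -- f and g index support lines
    (hf : ∃ k : Fin (n + 1), k ≠ Fin.last n ∧ f k = false)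
    (hg : ∃ k : Fin (n + 1), k ≠ Fin.last n ∧ g k = false)
    -- f and g differ in exactly one argument (other than the direction n)
    (hdiff : ∃ k₀ : Fin (n + 1), k₀ ≠ Fin.last n ∧ f k₀ ≠ g k₀ ∧
      ∀ k : Fin (n + 1), k ≠ k₀ → k ≠ Fin.last n → f k = g k)
    -- the n-support line at f is constant
    (hconst : c (Function.update f (Fin.last n) false) =
      c (Function.update f (Fin.last n) true)) :
    c (Function.update g (Fin.last n) false) =
      c (Function.update g (Fin.last n) true) := by
  obtain ⟨k₀, hk₀, hnefg, hag⟩ := hdiff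
  have hr := mcube_restrict hm f g k₀ hk₀ hnefg hag
  have hn0 : 0 < n := by omega
  rcases hsupp g hg with h | ⟨i, j, ⟨hCf, hCt⟩ | ⟨hCf, hCt⟩⟩
  · exact h
  · rcases msq_key hn0 hr (4 * i) j (4 * i + 2) j hCf hCt with h | h | ⟨_, h⟩
    · exact h.2
    · exact (h.1.symm.trans hconst).trans h.2
    · rcases h with h | h <;> omega
  · rcases msq_key hn0 hr (4 * i + 2) j (4 * i) j hCf hCt with h | h | ⟨_, h⟩
    · exact h.2
    · exact (h.1.symm.trans hconst).trans h.2
    · rcases h with h | h <;> omega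
end
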